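/- arXiv:1905.04999 — 7 statements merged into one kernel-verified Lean document; each statement's English description precedes it below -/
import Mathlib

section
/- (Diliberto's theorem, second solution.) The curve t ↦ a(t) f(x₀(t)) + (b(t)/‖f(x₀(t))‖²) f⊥(x₀(t)) is a solution of the variational equation ẏ(t) = A(t) y(t) along x₀. -/
open Matrix

noncomputable section

/-- The perpendicular vector field on ℝ²: `(v₁, v₂) ↦ (v₂, −v₁)`. -/
def perp (v : Fin 2 → ℝ) : Fin 2 → ℝ := ![v 1, -v 0]

/-- The Jacobian matrix of `f : ℝ² → ℝ²` at a point `x`: entry `(i, j)` is `∂fᵢ/∂xⱼ (x)`. -/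
def jac (f : (Fin 2 → ℝ) → (Fin 2 → ℝ)) (x : Fin 2 → ℝ) : Matrix (Fin 2) (Fin 2) ℝ :=
  Matrix.of fun i j => fderiv ℝ f x (Pi.single j 1) i

/-- The divergence of `f : ℝ² → ℝ²`, i.e. the trace of its Jacobian. -/
def divg (f : (Fin 2 → ℝ) → (Fin 2 → ℝ)) (x : Fin 2 → ℝ) : ℝ := (jac f x).trace

/-- Diliberto's function `b(t) = exp(∫₀ᵗ (div f)(x₀ s) ds)`. -/
def bD (f : (Fin 2 → ℝ) → (Fin 2 → ℝ)) (x₀ : ℝ → (Fin 2 → ℝ)) (t : ℝ) : ℝ :=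
  Real.exp (∫ s in (0:ℝ)..t, divg f (x₀ s))

/-- Diliberto's function
`a(t) = ∫₀ᵗ [f(x₀ s)ᵀ (A s + (A s)ᵀ) f⊥(x₀ s) / ‖f(x₀ s)‖⁴] b(s) ds`
(here `‖v‖² = v ⬝ᵥ v` is the square of the euclidean norm). -/
def aD (f : (Fin 2 → ℝ) → (Fin 2 → ℝ)) (x₀ : ℝ → (Fin 2 → ℝ)) (t : ℝ) : ℝ :=
  ∫ s in (0:ℝ)..t,
    (f (x₀ s) ⬝ᵥ ((jac f (x₀ s) + (jac f (x₀ s))ᵀ).mulVec (perp (f (x₀ s)))) /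
      (f (x₀ s) ⬝ᵥ f (x₀ s)) ^ 2) * bD f x₀ s

lemma fderiv_apply_eq_mulVec {f : (Fin 2 → ℝ) → (Fin 2 → ℝ)} {x : Fin 2 → ℝ} (w : Fin 2 → ℝ) :
    fderiv ℝ f x w = (jac f x).mulVec w := by
  have hw : w = w 0 • (Pi.single (0:Fin 2) (1:ℝ) : Fin 2 → ℝ) + w 1 • (Pi.single (1:Fin 2) (1:ℝ) : Fin 2 → ℝ) := by
    funext i; fin_cases i <;> simp [Pi.single_apply]
  funext i
  conv_lhs => rw [hw]
  simp [jac, Matrix.mulVec, dotProduct, Fin.sum_univ_two, map_add, _root_.map_smul]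
  ring

lemma cont_ftc (g : ℝ → ℝ) (hg : Continuous g) (t : ℝ) :
    HasDerivAt (fun τ => ∫ s in (0:ℝ)..τ, g s) (g t) t :=
  intervalIntegral.integral_hasDerivAt_right (hg.intervalIntegrable _ _)
    (hg.stronglyMeasurableAtFilter _ _) hg.continuousAt

/-- **Diliberto's theorem, second solution.**
`t ↦ a(t) f(x₀ t) + (b(t)/‖f(x₀ t)‖²) f⊥(x₀ t)` solves the variational
equation `ẏ = A(t) y` along `x₀`, where `A t = Df (x₀ t)`. -/
theorem diliberto_second_solution
    (f : (Fin 2 → ℝ) → (Fin 2 → ℝ)) (x₀ : ℝ → (Fin 2 → ℝ))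
    (hf : ContDiff ℝ 1 f)
    (hx : ∀ t, HasDerivAt x₀ (f (x₀ t)) t)
    (hfne : ∀ t, f (x₀ t) ≠ 0) :
    ∀ t, HasDerivAt
      (fun τ => aD f x₀ τ • f (x₀ τ) +
        (bD f x₀ τ / (f (x₀ τ) ⬝ᵥ f (x₀ τ))) • perp (f (x₀ τ)))
      ((jac f (x₀ t)).mulVec
        (aD f x₀ t • f (x₀ t) +
          (bD f x₀ t / (f (x₀ t) ⬝ᵥ f (x₀ t))) • perp (f (x₀ t)))) t := by
  intro t
  -- continuity facts
  have hx₀c : Continuous x₀ := by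
    rw [continuous_iff_continuousAt]; exact fun s => (hx s).continuousAt
  have hfc : Continuous f := hf.continuous
  have hgc : Continuous fun s => f (x₀ s) := hfc.comp hx₀c
  have hgic : ∀ i, Continuous fun s => f (x₀ s) i := fun i => (continuous_apply i).comp hgc
  have hjc : ∀ i j, Continuous fun s => jac f (x₀ s) i j := by
    intro i j
    have h1 : Continuous fun s => fderiv ℝ f (x₀ s) :=
      (hf.continuous_fderiv one_ne_zero).comp hx₀c
    have h2 : Continuous fun s => fderiv ℝ f (x₀ s) (Pi.single j 1) :=
      h1.clm_apply continuous_const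
    exact (continuous_apply i).comp h2
  -- nonvanishing of q
  have hq : ∀ s, f (x₀ s) ⬝ᵥ f (x₀ s) ≠ 0 := by
    intro s
    have h := hfne s
    have h1 : f (x₀ s) 0 ≠ 0 ∨ f (x₀ s) 1 ≠ 0 := by
      by_contra hc
      push_neg at hc
      exact h (by funext i; fin_cases i <;> simp [hc.1, hc.2])
    simp only [dotProduct, Fin.sum_univ_two]
    rcases h1 with h1 | h1
    · nlinarith [mul_self_nonneg (f (x₀ s) 1), mul_self_pos.mpr h1]
    · nlinarith [mul_self_nonneg (f (x₀ s) 0), mul_self_pos.mpr h1]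
  -- derivative of f ∘ x₀
  have hU : ∀ s, HasDerivAt (fun τ => f (x₀ τ)) ((jac f (x₀ s)).mulVec (f (x₀ s))) s := by
    intro s
    have hd : DifferentiableAt ℝ f (x₀ s) := (hf.differentiable one_ne_zero).differentiableAt
    have := hd.hasFDerivAt.comp_hasDerivAt s (hx s)
    rwa [fderiv_apply_eq_mulVec] at this
  have hUi : ∀ (i : Fin 2), HasDerivAt (fun τ => f (x₀ τ) i)
      (((jac f (x₀ t)).mulVec (f (x₀ t))) i) t := by
    intro i
    exact ((ContinuousLinearMap.proj (R := ℝ) (φ := fun _ : Fin 2 => ℝ) i).hasFDerivAt).comp_hasDerivAt t (hU t)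
  -- derivative of b
  have hBall : ∀ s, HasDerivAt (bD f x₀) (divg f (x₀ s) * bD f x₀ s) s := by
    intro s
    have hdc : Continuous fun r => divg f (x₀ r) := by
      simp only [divg, Matrix.trace_fin_two]
      exact (hjc 0 0).add (hjc 1 1)
    have hI := cont_ftc _ hdc s
    have := (Real.hasDerivAt_exp (∫ r in (0:ℝ)..s, divg f (x₀ r))).comp s hI
    rw [show bD f x₀ = Real.exp ∘ fun τ => ∫ s in (0:ℝ)..τ, divg f (x₀ s) from rfl]
    simpa [bD, mul_comm] using this
  have hBc : Continuous (bD f x₀) := by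
    rw [continuous_iff_continuousAt]; exact fun s => (hBall s).continuousAt
  -- derivative of a
  set α : ℝ → ℝ := fun s =>
    (f (x₀ s) ⬝ᵥ ((jac f (x₀ s) + (jac f (x₀ s))ᵀ).mulVec (perp (f (x₀ s)))) /
      (f (x₀ s) ⬝ᵥ f (x₀ s)) ^ 2) * bD f x₀ s with hα
  have hQc : Continuous fun s => f (x₀ s) ⬝ᵥ f (x₀ s) := by
    simp only [dotProduct, Fin.sum_univ_two]
    exact ((hgic 0).mul (hgic 0)).add ((hgic 1).mul (hgic 1))
  have hαc : Continuous α := by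
    have hnum : Continuous fun s =>
        f (x₀ s) ⬝ᵥ ((jac f (x₀ s) + (jac f (x₀ s))ᵀ).mulVec (perp (f (x₀ s)))) := by
      simp only [dotProduct, Fin.sum_univ_two, Matrix.mulVec, Matrix.add_apply,
        Matrix.transpose_apply, perp, Matrix.cons_val_zero, Matrix.cons_val_one, Matrix.head_cons]
      fun_prop
    have hden : Continuous fun s => (f (x₀ s) ⬝ᵥ f (x₀ s)) ^ 2 := hQc.pow 2
    exact ((hnum.div hden (fun s => pow_ne_zero 2 (hq s))).mul hBc)
  have hA : HasDerivAt (aD f x₀) (α t) t := cont_ftc α hαc t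
  -- scalar abbreviations
  have hQ : HasDerivAt (fun τ => f (x₀ τ) ⬝ᵥ f (x₀ τ))
      (((jac f (x₀ t)).mulVec (f (x₀ t))) 0 * f (x₀ t) 0 + f (x₀ t) 0 * ((jac f (x₀ t)).mulVec (f (x₀ t))) 0
        + (((jac f (x₀ t)).mulVec (f (x₀ t))) 1 * f (x₀ t) 1 + f (x₀ t) 1 * ((jac f (x₀ t)).mulVec (f (x₀ t))) 1)) t := by
    simp only [dotProduct, Fin.sum_univ_two]
    exact ((hUi 0).mul (hUi 0)).add ((hUi 1).mul (hUi 1))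
  -- componentwise
  rw [show (fun τ => aD f x₀ τ • f (x₀ τ) +
        (bD f x₀ τ / (f (x₀ τ) ⬝ᵥ f (x₀ τ))) • perp (f (x₀ τ)))
      = fun τ i => aD f x₀ τ * f (x₀ τ) i +
        (bD f x₀ τ / (f (x₀ τ) ⬝ᵥ f (x₀ τ))) * perp (f (x₀ τ)) i from rfl]
  have hqt : f (x₀ t) 0 * f (x₀ t) 0 + f (x₀ t) 1 * f (x₀ t) 1 ≠ 0 := by
    have := hq t; simpa [dotProduct, Fin.sum_univ_two] using this
  rw [hasDerivAt_pi]
  intro i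
  have hB := hBall t
  fin_cases i
  · -- component 0
    have h0 : HasDerivAt (fun τ => aD f x₀ τ * f (x₀ τ) 0 +
        (bD f x₀ τ / (f (x₀ τ) ⬝ᵥ f (x₀ τ))) * f (x₀ τ) 1) _ t :=
      (hA.mul (hUi 0)).add ((hB.div hQ (hq t)).mul (hUi 1))
    refine h0.congr_deriv ?_
    simp only [Matrix.mulVec, dotProduct, Fin.sum_univ_two, Pi.add_apply, Pi.smul_apply,
        smul_eq_mul, perp, Matrix.cons_val_zero, Matrix.cons_val_one, Matrix.head_cons,
        hα, divg, Matrix.trace_fin_two, Matrix.add_apply, Matrix.transpose_apply,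
        Fin.mk_zero, Fin.mk_one, Fin.isValue, Pi.div_apply]
    field_simp [hqt, show f (x₀ t) 0 ^ 2 + f (x₀ t) 1 ^ 2 ≠ 0 by simpa [sq] using hqt]
    ring
  · have h1 : HasDerivAt (fun τ => aD f x₀ τ * f (x₀ τ) 1 +
        (bD f x₀ τ / (f (x₀ τ) ⬝ᵥ f (x₀ τ))) * (-f (x₀ τ) 0)) _ t :=
      (hA.mul (hUi 1)).add ((hB.div hQ (hq t)).mul ((hUi 0).neg))
    refine h1.congr_deriv ?_
    simp only [Matrix.mulVec, dotProduct, Fin.sum_univ_two, Pi.add_apply, Pi.smul_apply,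
        smul_eq_mul, perp, Matrix.cons_val_zero, Matrix.cons_val_one, Matrix.head_cons,
        hα, divg, Matrix.trace_fin_two, Matrix.add_apply, Matrix.transpose_apply,
        Fin.mk_zero, Fin.mk_one, Fin.isValue, Pi.div_apply]
    field_simp [hqt, show f (x₀ t) 0 ^ 2 + f (x₀ t) 1 ^ 2 ≠ 0 by simpa [sq] using hqt]
    ring


end
end

section
/- If x₀ is T-periodic, then the monodromy matrix X̃(0)⁻¹ · X̃(T), where X̃(t) is the Diliberto matrix with first column f(x₀(t)) and second column a(t) f(x₀(t)) + (b(t)/‖f(x₀(t))‖²) f⊥(x₀(t)), is upper triangular with entries X̃(0)⁻¹X̃(T) = [[1, a(T)], [0, b(T)]]. In particular the characteristic (Floquet) multipliers of the variational equation along the periodic orbit are λ₁ = 1 and λ₂ = b(T) = exp(∫₀ᵀ (div f)(x₀(s)) ds). -/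
/-!
Along a periodic orbit the vector field returns to its initial value, `f (x₀ T) = f (x₀ 0)`, so
the two Diliberto matrices `X̃(0)` and `X̃(T)` are built from the same vector `v = f (x₀ 0)` and
differ only in the scalars `a` and `b`. Writing the matrix with columns `v` and
`a v + (b / ‖v‖²) v⊥` as the matrix with columns `v`, `v⊥ / ‖v‖²` times `[[1, a], [0, b]]`, and
noting that `a(0) = 0`, `b(0) = 1`, the monodromy matrix is exactly `[[1, a(T)], [0, b(T)]]`.
-/

open Matrix

noncomputable section

/-- The Diliberto fundamental matrix: first column `f(x₀ t)`, second column
`a(t) f(x₀ t) + (b(t)/‖f(x₀ t)‖²) f⊥(x₀ t)`. -/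
def XD (f : (Fin 2 → ℝ) → (Fin 2 → ℝ)) (x₀ : ℝ → (Fin 2 → ℝ)) (t : ℝ) :
    Matrix (Fin 2) (Fin 2) ℝ :=
  Matrix.of fun i j =>
    ![f (x₀ t),
      aD f x₀ t • f (x₀ t) + (bD f x₀ t / (f (x₀ t) ⬝ᵥ f (x₀ t))) • perp (f (x₀ t))] j i

open Polynomial

def dilibertoMatrix (v : Fin 2 → ℝ) (a b : ℝ) : Matrix (Fin 2) (Fin 2) ℝ :=
  Matrix.of fun i j => ![v, a • v + (b / (v ⬝ᵥ v)) • perp v] j i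

theorem XD_eq_dilibertoMatrix (f : (Fin 2 → ℝ) → (Fin 2 → ℝ)) (x₀ : ℝ → (Fin 2 → ℝ)) (t : ℝ) :
    XD f x₀ t = dilibertoMatrix (f (x₀ t)) (aD f x₀ t) (bD f x₀ t) :=
  rfl

theorem aD_zero (f : (Fin 2 → ℝ) → (Fin 2 → ℝ)) (x₀ : ℝ → (Fin 2 → ℝ)) : aD f x₀ 0 = 0 :=
  intervalIntegral.integral_same

theorem bD_zero (f : (Fin 2 → ℝ) → (Fin 2 → ℝ)) (x₀ : ℝ → (Fin 2 → ℝ)) : bD f x₀ 0 = 1 := by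
  simp [bD]

theorem dilibertoMatrix_eq_mul (v : Fin 2 → ℝ) (a b : ℝ) :
    dilibertoMatrix v a b = dilibertoMatrix v 0 1 * !![1, a; 0, b] := by
  ext i j
  fin_cases i <;> fin_cases j <;>
    simp [dilibertoMatrix, mul_apply, Fin.sum_univ_two] <;> ring

theorem det_dilibertoMatrix {v : Fin 2 → ℝ} (hv : v ≠ 0) (a b : ℝ) :
    (dilibertoMatrix v a b).det = -b := by
  have hnorm : v 0 ^ 2 + v 1 ^ 2 ≠ 0 := by
    simpa [dotProduct, Fin.sum_univ_two, sq] using mt dotProduct_self_eq_zero.mp hv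
  simp only [det_fin_two, dilibertoMatrix, of_apply, perp, dotProduct, Fin.sum_univ_two,
    cons_val_zero, cons_val_one, Pi.add_apply, Pi.smul_apply, smul_eq_mul]
  field_simp
  ring

theorem inv_mul_dilibertoMatrix {v : Fin 2 → ℝ} (hv : v ≠ 0) (a b : ℝ) :
    (dilibertoMatrix v 0 1)⁻¹ * dilibertoMatrix v a b = !![1, a; 0, b] := by
  have hunit : IsUnit (dilibertoMatrix v 0 1).det := by
    simp [det_dilibertoMatrix hv]
  rw [dilibertoMatrix_eq_mul v a b, ← Matrix.mul_assoc, nonsing_inv_mul _ hunit, Matrix.one_mul]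

theorem charpoly_fin_two_of_upper {R : Type*} [CommRing R] (a b c : R) :
    (!![a, b; 0, c]).charpoly = (X - C a) * (X - C c) := by
  have hupper : (!![a, b; 0, c]).IsUpperTriangular := by
    intro i j hij
    fin_cases i <;> fin_cases j <;> simp_all
  simp [charpoly_of_isUpperTriangular _ hupper, Fin.prod_univ_two]

theorem monodromy_matrix_upper_triangular_general
    (f : (Fin 2 → ℝ) → (Fin 2 → ℝ)) (x₀ : ℝ → (Fin 2 → ℝ)) (T : ℝ)
    (hfne : ∀ t, f (x₀ t) ≠ 0)
    (hper : ∀ t, x₀ (t + T) = x₀ t) :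
    (XD f x₀ 0)⁻¹ * XD f x₀ T = !![1, aD f x₀ T; 0, bD f x₀ T] ∧
    ((XD f x₀ 0)⁻¹ * XD f x₀ T).charpoly =
      (Polynomial.X - Polynomial.C 1) *
        (Polynomial.X - Polynomial.C (Real.exp (∫ s in (0:ℝ)..T, divg f (x₀ s)))) := by
  have hclosed : x₀ T = x₀ 0 := by simpa using hper 0
  have hmonodromy : (XD f x₀ 0)⁻¹ * XD f x₀ T = !![1, aD f x₀ T; 0, bD f x₀ T] := by
    rw [XD_eq_dilibertoMatrix, XD_eq_dilibertoMatrix, aD_zero, bD_zero, hclosed]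
    exact inv_mul_dilibertoMatrix (hfne 0) _ _
  refine ⟨hmonodromy, ?_⟩
  rw [hmonodromy, charpoly_fin_two_of_upper, bD]

/-- For a `T`-periodic solution the monodromy matrix
`X̃(0)⁻¹ X̃(T)` equals `[[1, a(T)], [0, b(T)]]`; in particular the Floquet
multipliers (the eigenvalues of the monodromy matrix, i.e. the roots of its
characteristic polynomial) are `λ₁ = 1` and `λ₂ = b(T) = exp(∫₀ᵀ div f (x₀ s) ds)`. -/
theorem monodromy_matrix_upper_triangular
    (f : (Fin 2 → ℝ) → (Fin 2 → ℝ)) (x₀ : ℝ → (Fin 2 → ℝ)) (T : ℝ)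
    (hf : ContDiff ℝ 1 f)
    (hx : ∀ t, HasDerivAt x₀ (f (x₀ t)) t)
    (hfne : ∀ t, f (x₀ t) ≠ 0)
    (hT : 0 < T)
    (hper : ∀ t, x₀ (t + T) = x₀ t) :
    (XD f x₀ 0)⁻¹ * XD f x₀ T = !![1, aD f x₀ T; 0, bD f x₀ T] ∧
    ((XD f x₀ 0)⁻¹ * XD f x₀ T).charpoly =
      (Polynomial.X - Polynomial.C 1) *
        (Polynomial.X - Polynomial.C (Real.exp (∫ s in (0:ℝ)..T, divg f (x₀ s)))) :=
  monodromy_matrix_upper_triangular_general f x₀ T hfne hper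

end
end

section
/- If x₀ is T-periodic, then a satisfies a(t + T) = a(T) + a(t) · b(T) for all t. -/
open Matrix

noncomputable section

/-! A quasi-periodic integrand, `g (s + T) = c * g s`, has a primitive `F = ∫₀` satisfying
`F (t + T) = F T + c * F t`: split `∫₀^{t+T}` at `T` and translate the second piece back to
`[0, t]`. Both `b` (via `log b`, with `c = 1`) and `a` (with `c = b T`) are such primitives. -/

theorem intervalIntegral_zero_add_of_map_add_eq_mul {g : ℝ → ℝ} {T c : ℝ}
    (hg : ∀ a b, IntervalIntegrable g MeasureTheory.volume a b)
    (hshift : ∀ s, g (s + T) = c * g s) (t : ℝ) :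
    ∫ s in (0:ℝ)..t + T, g s = (∫ s in (0:ℝ)..T, g s) + c * ∫ s in (0:ℝ)..t, g s := by
  have htranslate : ∫ s in T..t + T, g s = ∫ s in (0:ℝ)..t, g (s + T) := by
    rw [intervalIntegral.integral_comp_add_right, zero_add]
  rw [← intervalIntegral.integral_add_adjacent_intervals (hg 0 T) (hg T (t + T)), htranslate,
    ← intervalIntegral.integral_const_mul]
  simp only [hshift]

section

variable {f : (Fin 2 → ℝ) → (Fin 2 → ℝ)} {x₀ : ℝ → (Fin 2 → ℝ)}

theorem continuous_perp : Continuous perp := by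
  refine continuous_pi fun i => ?_
  fin_cases i
  · exact continuous_apply 1
  · exact (continuous_apply 0).neg

theorem ContDiff.continuous_jac (hf : ContDiff ℝ 1 f) : Continuous (jac f) :=
  continuous_matrix fun i _ =>
    (continuous_apply i).comp ((hf.continuous_fderiv one_ne_zero).clm_apply continuous_const)

theorem ContDiff.continuous_divg (hf : ContDiff ℝ 1 f) : Continuous (divg f) :=
  hf.continuous_jac.matrix_trace

theorem ContDiff.continuous_bD (hf : ContDiff ℝ 1 f) (hx₀ : Continuous x₀) :
    Continuous (bD f x₀) :=
  Real.continuous_exp.comp <|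
    intervalIntegral.continuous_primitive (hf.continuous_divg.comp hx₀).intervalIntegrable 0

theorem ContDiff.continuous_aD_integrand (hf : ContDiff ℝ 1 f) (hx₀ : Continuous x₀)
    (hfne : ∀ t, f (x₀ t) ≠ 0) :
    Continuous fun s =>
      (f (x₀ s) ⬝ᵥ ((jac f (x₀ s) + (jac f (x₀ s))ᵀ).mulVec (perp (f (x₀ s)))) /
        (f (x₀ s) ⬝ᵥ f (x₀ s)) ^ 2) * bD f x₀ s := by
  have hfx : Continuous fun s => f (x₀ s) := hf.continuous.comp hx₀
  have hjac : Continuous fun s => jac f (x₀ s) := hf.continuous_jac.comp hx₀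
  have hnum := hfx.dotProduct
    ((hjac.add hjac.matrix_transpose).matrix_mulVec (continuous_perp.comp hfx))
  have hden : ∀ s, (f (x₀ s) ⬝ᵥ f (x₀ s)) ^ 2 ≠ 0 := fun s =>
    pow_ne_zero 2 (dotProduct_self_eq_zero.not.mpr (hfne s))
  exact (hnum.div ((hfx.dotProduct hfx).pow 2) hden).mul (hf.continuous_bD hx₀)

theorem bD_add_period {T : ℝ} (hf : ContDiff ℝ 1 f) (hx₀ : Continuous x₀)
    (hper : ∀ t, x₀ (t + T) = x₀ t) (t : ℝ) :
    bD f x₀ (t + T) = bD f x₀ T * bD f x₀ t := by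
  have hdiv : Continuous fun s => divg f (x₀ s) := hf.continuous_divg.comp hx₀
  rw [bD, bD, bD, ← Real.exp_add,
    intervalIntegral_zero_add_of_map_add_eq_mul (c := 1) hdiv.intervalIntegrable
      (fun s => by rw [hper, one_mul]), one_mul]

end

theorem aD_translation_general
    (f : (Fin 2 → ℝ) → (Fin 2 → ℝ)) (x₀ : ℝ → (Fin 2 → ℝ)) (T : ℝ)
    (hf : ContDiff ℝ 1 f)
    (hx : ∀ t, HasDerivAt x₀ (f (x₀ t)) t)
    (hfne : ∀ t, f (x₀ t) ≠ 0)
    (hper : ∀ t, x₀ (t + T) = x₀ t) :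
    ∀ t, aD f x₀ (t + T) = aD f x₀ T + aD f x₀ t * bD f x₀ T := by
  intro t
  have hx₀ : Continuous x₀ := continuous_iff_continuousAt.2 fun s => (hx s).continuousAt
  rw [mul_comm]
  refine intervalIntegral_zero_add_of_map_add_eq_mul
    (hf.continuous_aD_integrand hx₀ hfne).intervalIntegrable (fun s => ?_) t
  rw [hper, bD_add_period hf hx₀ hper]
  ring

/-- For a `T`-periodic solution `x₀`, the function `a` satisfies
`a(t + T) = a(T) + a(t) · b(T)`. -/
theorem aD_translation
    (f : (Fin 2 → ℝ) → (Fin 2 → ℝ)) (x₀ : ℝ → (Fin 2 → ℝ)) (T : ℝ)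
    (hf : ContDiff ℝ 1 f)
    (hx : ∀ t, HasDerivAt x₀ (f (x₀ t)) t)
    (hfne : ∀ t, f (x₀ t) ≠ 0)
    (hT : 0 < T)
    (hper : ∀ t, x₀ (t + T) = x₀ t) :
    ∀ t, aD f x₀ (t + T) = aD f x₀ T + aD f x₀ t * bD f x₀ T :=
  aD_translation_general f x₀ T hf hx hfne hper

end
end

section
/- (Floquet eigensolution property of u₂.) The curve t ↦ e^{μ₂ t} u₂(t) = α(t) f(x₀(t)) + β(t) f⊥(x₀(t)) is a solution of the variational equation ẏ(t) = A(t) y(t) along x₀. -/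
open Matrix

noncomputable section

/-- The second Floquet exponent `μ₂ = (1/T) ∫₀ᵀ (div f)(x₀ s) ds`. -/
def mu2D (f : (Fin 2 → ℝ) → (Fin 2 → ℝ)) (x₀ : ℝ → (Fin 2 → ℝ)) (T : ℝ) : ℝ :=
  (1 / T) * ∫ s in (0:ℝ)..T, divg f (x₀ s)

/-- `α(t) = a(T)/(b(T) − 1) + a(t)`. -/
def alphaD (f : (Fin 2 → ℝ) → (Fin 2 → ℝ)) (x₀ : ℝ → (Fin 2 → ℝ)) (T t : ℝ) : ℝ :=
  aD f x₀ T / (bD f x₀ T - 1) + aD f x₀ t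

/-- `β(t) = b(t)/‖f(x₀ t)‖²` (with `‖v‖² = v ⬝ᵥ v`). -/
def betaD (f : (Fin 2 → ℝ) → (Fin 2 → ℝ)) (x₀ : ℝ → (Fin 2 → ℝ)) (t : ℝ) : ℝ :=
  bD f x₀ t / (f (x₀ t) ⬝ᵥ f (x₀ t))

/-- First Floquet eigenvector `u₁(t) = f(x₀ t)`. -/
def u1D (f : (Fin 2 → ℝ) → (Fin 2 → ℝ)) (x₀ : ℝ → (Fin 2 → ℝ)) (t : ℝ) : Fin 2 → ℝ :=
  f (x₀ t)

/-- Second Floquet eigenvector `u₂(t) = e^{−μ₂ t} (α(t) f(x₀ t) + β(t) f⊥(x₀ t))`. -/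
def u2D (f : (Fin 2 → ℝ) → (Fin 2 → ℝ)) (x₀ : ℝ → (Fin 2 → ℝ)) (T t : ℝ) : Fin 2 → ℝ :=
  Real.exp (-(mu2D f x₀ T) * t) •
    (alphaD f x₀ T t • f (x₀ t) + betaD f x₀ t • perp (f (x₀ t)))

/-- First covector `v₁(t) = (1/b(t)) (−α(t) f⊥(x₀ t) + β(t) f(x₀ t))`. -/
def v1D (f : (Fin 2 → ℝ) → (Fin 2 → ℝ)) (x₀ : ℝ → (Fin 2 → ℝ)) (T t : ℝ) : Fin 2 → ℝ :=
  (1 / bD f x₀ t) •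
    ((-(alphaD f x₀ T t)) • perp (f (x₀ t)) + betaD f x₀ t • f (x₀ t))

/-- Second covector `v₂(t) = (e^{μ₂ t}/b(t)) f⊥(x₀ t)`. -/
def v2D (f : (Fin 2 → ℝ) → (Fin 2 → ℝ)) (x₀ : ℝ → (Fin 2 → ℝ)) (T t : ℝ) : Fin 2 → ℝ :=
  (Real.exp (mu2D f x₀ T * t) / bD f x₀ t) • perp (f (x₀ t))

lemma clm_apply_eq_mulVec (L : (Fin 2 → ℝ) →L[ℝ] (Fin 2 → ℝ)) (v : Fin 2 → ℝ) :
    L v = (Matrix.of fun i j => L (Pi.single j 1) i).mulVec v := by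
  have hv : v = v 0 • (Pi.single 0 1 : Fin 2 → ℝ) + v 1 • (Pi.single 1 1 : Fin 2 → ℝ) := by
    funext j; fin_cases j <;> simp
  conv_lhs => rw [hv]
  funext i
  simp [Matrix.mulVec, dotProduct, Fin.sum_univ_two, mul_comm]

/-- **Floquet eigensolution property of `u₂`.** The curve
`t ↦ e^{μ₂ t} u₂(t) = α(t) f(x₀ t) + β(t) f⊥(x₀ t)` solves the variational
equation `ẏ = A(t) y` along `x₀`. -/
theorem u2_floquet_eigensolution
    (f : (Fin 2 → ℝ) → (Fin 2 → ℝ)) (x₀ : ℝ → (Fin 2 → ℝ)) (T : ℝ)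
    (hf : ContDiff ℝ 1 f)
    (hx : ∀ t, HasDerivAt x₀ (f (x₀ t)) t)
    (hfne : ∀ t, f (x₀ t) ≠ 0)
    (hT : 0 < T)
    (hper : ∀ t, x₀ (t + T) = x₀ t)
    (hbT : bD f x₀ T ≠ 1) :
    (∀ t, Real.exp (mu2D f x₀ T * t) • u2D f x₀ T t =
      alphaD f x₀ T t • f (x₀ t) + betaD f x₀ t • perp (f (x₀ t))) ∧
    (∀ t, HasDerivAt
      (fun τ => alphaD f x₀ T τ • f (x₀ τ) + betaD f x₀ τ • perp (f (x₀ τ)))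
      ((jac f (x₀ t)).mulVec
        (alphaD f x₀ T t • f (x₀ t) + betaD f x₀ t • perp (f (x₀ t)))) t) := by
  -- basic continuity
  have hx0c : Continuous x₀ := by
    rw [continuous_iff_continuousAt]; exact fun t => (hx t).continuousAt
  have cF : Continuous fun s => f (x₀ s) := hf.continuous.comp hx0c
  have cFi : ∀ i, Continuous fun s => f (x₀ s) i := fun i => (continuous_apply i).comp cF
  have cfd : Continuous fun s => fderiv ℝ f (x₀ s) :=
    (hf.continuous_fderiv one_ne_zero).comp hx0c
  have cA : ∀ i j, Continuous fun s => jac f (x₀ s) i j := by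
    intro i j
    have h1 : Continuous fun s => (fderiv ℝ f (x₀ s)) (Pi.single j 1) :=
      ((ContinuousLinearMap.apply ℝ (Fin 2 → ℝ) (Pi.single j 1)).continuous).comp cfd
    exact (continuous_apply i).comp h1
  have cdiv : Continuous fun s => divg f (x₀ s) := by
    have : (fun s => divg f (x₀ s)) = fun s => jac f (x₀ s) 0 0 + jac f (x₀ s) 1 1 := by
      funext s; simp [divg, Matrix.trace_fin_two]
    rw [this]; exact (cA 0 0).add (cA 1 1)
  have cq : Continuous fun s => f (x₀ s) ⬝ᵥ f (x₀ s) := by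
    have : (fun s => f (x₀ s) ⬝ᵥ f (x₀ s)) =
        fun s => f (x₀ s) 0 * f (x₀ s) 0 + f (x₀ s) 1 * f (x₀ s) 1 := by
      funext s; simp [dotProduct, Fin.sum_univ_two]
    rw [this]; exact ((cFi 0).mul (cFi 0)).add ((cFi 1).mul (cFi 1))
  have hqpos : ∀ s, 0 < f (x₀ s) ⬝ᵥ f (x₀ s) := by
    intro s
    have h : f (x₀ s) 0 ≠ 0 ∨ f (x₀ s) 1 ≠ 0 := by
      by_contra hc; push_neg at hc
      exact hfne s (by funext j; fin_cases j <;> simp [hc.1, hc.2])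
    have hd : f (x₀ s) ⬝ᵥ f (x₀ s) =
        f (x₀ s) 0 * f (x₀ s) 0 + f (x₀ s) 1 * f (x₀ s) 1 := by
      simp [dotProduct, Fin.sum_univ_two]
    rw [hd]
    rcases h with h | h
    · exact add_pos_of_pos_of_nonneg (mul_self_pos.2 h) (mul_self_nonneg _)
    · exact add_pos_of_nonneg_of_pos (mul_self_nonneg _) (mul_self_pos.2 h)
  have hqne : ∀ s, f (x₀ s) ⬝ᵥ f (x₀ s) ≠ 0 := fun s => (hqpos s).ne'
  -- derivative of b
  have hbder : ∀ t, HasDerivAt (bD f x₀) (divg f (x₀ t) * bD f x₀ t) t := by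
    intro t
    have h1 : HasDerivAt (fun u => ∫ s in (0:ℝ)..u, divg f (x₀ s)) (divg f (x₀ t)) t :=
      intervalIntegral.integral_hasDerivAt_right (cdiv.intervalIntegrable _ _)
        (cdiv.stronglyMeasurableAtFilter _ _) cdiv.continuousAt
    have := h1.exp
    rw [mul_comm]; exact this
  have cb : Continuous (bD f x₀) := by
    rw [continuous_iff_continuousAt]; exact fun t => (hbder t).continuousAt
  -- continuity of the integrand of a
  have cmv : ∀ i, Continuous fun s =>
      ((jac f (x₀ s) + (jac f (x₀ s))ᵀ).mulVec (perp (f (x₀ s)))) i := by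
    intro i
    have h1 : (fun s => ((jac f (x₀ s) + (jac f (x₀ s))ᵀ).mulVec (perp (f (x₀ s)))) i) =
        fun s => (jac f (x₀ s) i 0 + jac f (x₀ s) 0 i) * f (x₀ s) 1 +
          (jac f (x₀ s) i 1 + jac f (x₀ s) 1 i) * (-(f (x₀ s) 0)) := by
      funext s
      simp [Matrix.mulVec, dotProduct, Fin.sum_univ_two, perp,
        Matrix.add_apply, Matrix.transpose_apply]
    rw [h1]
    exact (((cA i 0).add (cA 0 i)).mul (cFi 1)).add
      (((cA i 1).add (cA 1 i)).mul (cFi 0).neg)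
  have cnum : Continuous fun s =>
      f (x₀ s) ⬝ᵥ ((jac f (x₀ s) + (jac f (x₀ s))ᵀ).mulVec (perp (f (x₀ s)))) := by
    have h1 : (fun s => f (x₀ s) ⬝ᵥ ((jac f (x₀ s) + (jac f (x₀ s))ᵀ).mulVec (perp (f (x₀ s))))) =
        fun s => f (x₀ s) 0 * ((jac f (x₀ s) + (jac f (x₀ s))ᵀ).mulVec (perp (f (x₀ s)))) 0 +
          f (x₀ s) 1 * ((jac f (x₀ s) + (jac f (x₀ s))ᵀ).mulVec (perp (f (x₀ s)))) 1 := by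
      funext s; simp [dotProduct, Fin.sum_univ_two]
    rw [h1]
    exact ((cFi 0).mul (cmv 0)).add ((cFi 1).mul (cmv 1))
  have cInt : Continuous fun s =>
      (f (x₀ s) ⬝ᵥ ((jac f (x₀ s) + (jac f (x₀ s))ᵀ).mulVec (perp (f (x₀ s)))) /
        (f (x₀ s) ⬝ᵥ f (x₀ s)) ^ 2) * bD f x₀ s :=
    ((cnum.div (cq.pow 2) (fun s => pow_ne_zero 2 (hqne s))).mul cb)
  have hader : ∀ t, HasDerivAt (aD f x₀)
      ((f (x₀ t) ⬝ᵥ ((jac f (x₀ t) + (jac f (x₀ t))ᵀ).mulVec (perp (f (x₀ t)))) /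
        (f (x₀ t) ⬝ᵥ f (x₀ t)) ^ 2) * bD f x₀ t) t := by
    intro t
    exact intervalIntegral.integral_hasDerivAt_right (cInt.intervalIntegrable _ _)
      (cInt.stronglyMeasurableAtFilter _ _) cInt.continuousAt
  -- derivative of F = f ∘ x₀
  have hF : ∀ t, HasDerivAt (fun τ => f (x₀ τ)) ((jac f (x₀ t)).mulVec (f (x₀ t))) t := by
    intro t
    have hd := (hf.differentiable one_ne_zero (x₀ t)).hasFDerivAt
    have h1 := hd.comp_hasDerivAt t (hx t)
    have h2 : (fderiv ℝ f (x₀ t)) (f (x₀ t)) = (jac f (x₀ t)).mulVec (f (x₀ t)) :=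
      clm_apply_eq_mulVec _ _
    rw [h2] at h1
    exact h1
  constructor
  · intro t
    simp only [u2D, smul_smul, ← Real.exp_add]
    have : mu2D f x₀ T * t + -mu2D f x₀ T * t = 0 := by ring
    rw [this, Real.exp_zero, one_smul]
  · intro t
    have hFi : ∀ i, HasDerivAt (fun τ => f (x₀ τ) i)
        (((jac f (x₀ t)).mulVec (f (x₀ t))) i) t := fun i => hasDerivAt_pi.1 (hF t) i
    have hperp : HasDerivAt (fun τ => perp (f (x₀ τ)))
        (perp ((jac f (x₀ t)).mulVec (f (x₀ t)))) t := by
      apply hasDerivAt_pi.2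
      intro i
      fin_cases i
      · simpa [perp] using hFi 1
      · simpa [perp] using (hFi 0).fun_neg
    have hq' : HasDerivAt (fun τ => f (x₀ τ) ⬝ᵥ f (x₀ τ))
        (((jac f (x₀ t)).mulVec (f (x₀ t))) 0 * f (x₀ t) 0 +
          f (x₀ t) 0 * ((jac f (x₀ t)).mulVec (f (x₀ t))) 0 +
          (((jac f (x₀ t)).mulVec (f (x₀ t))) 1 * f (x₀ t) 1 +
          f (x₀ t) 1 * ((jac f (x₀ t)).mulVec (f (x₀ t))) 1)) t := by
      have heq : (fun τ => f (x₀ τ) ⬝ᵥ f (x₀ τ)) =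
          fun τ => f (x₀ τ) 0 * f (x₀ τ) 0 + f (x₀ τ) 1 * f (x₀ τ) 1 := by
        funext τ; simp [dotProduct, Fin.sum_univ_two]
      rw [heq]
      exact (((hFi 0).mul (hFi 0)).add ((hFi 1).mul (hFi 1)))
    have halpha : HasDerivAt (fun τ => alphaD f x₀ T τ)
        ((f (x₀ t) ⬝ᵥ ((jac f (x₀ t) + (jac f (x₀ t))ᵀ).mulVec (perp (f (x₀ t)))) /
          (f (x₀ t) ⬝ᵥ f (x₀ t)) ^ 2) * bD f x₀ t) t := by
      simpa [alphaD] using (hader t).const_add (aD f x₀ T / (bD f x₀ T - 1))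
    have hbeta : HasDerivAt (fun τ => betaD f x₀ τ)
        ((divg f (x₀ t) * bD f x₀ t * (f (x₀ t) ⬝ᵥ f (x₀ t)) - bD f x₀ t *
          (((jac f (x₀ t)).mulVec (f (x₀ t))) 0 * f (x₀ t) 0 +
          f (x₀ t) 0 * ((jac f (x₀ t)).mulVec (f (x₀ t))) 0 +
          (((jac f (x₀ t)).mulVec (f (x₀ t))) 1 * f (x₀ t) 1 +
          f (x₀ t) 1 * ((jac f (x₀ t)).mulVec (f (x₀ t))) 1))) /
          (f (x₀ t) ⬝ᵥ f (x₀ t)) ^ 2) t := by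
      simpa [betaD] using (hbder t).fun_div hq' (hqne t)
    have h1 := halpha.smul (hF t)
    have h2 := hbeta.smul hperp
    have hsum := h1.add h2
    refine hsum.congr_deriv ?_
    have hq2 : f (x₀ t) 0 * f (x₀ t) 0 + f (x₀ t) 1 * f (x₀ t) 1 ≠ 0 := by
      have := hqne t
      simpa [dotProduct, Fin.sum_univ_two] using this
    funext i
    fin_cases i <;>
    · simp only [Matrix.mulVec, dotProduct, Fin.sum_univ_two, perp, betaD,
        divg, Matrix.trace_fin_two, Matrix.add_apply, Matrix.transpose_apply,
        Pi.add_apply, Pi.smul_apply, smul_eq_mul, Matrix.cons_val_zero, Matrix.cons_val_one,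
        Matrix.head_cons, Fin.zero_eta, Fin.mk_one, Fin.isValue]
      have hq3 : f (x₀ t) 0 ^ 2 + f (x₀ t) 1 ^ 2 ≠ 0 := by simpa [sq] using hq2
      field_simp
      ring


end
end

section
/- (Theorem 3, first part.) The covector v₁(t) := (1/b(t))·(−α(t) f⊥(x₀(t)) + β(t) f(x₀(t))) is a solution of the adjoint equation ẏ(t) = −A(t)ᵀ y(t). -/
open Matrix

noncomputable section

lemma ftc {g : ℝ → ℝ} (hg : Continuous g) (t : ℝ) :
    HasDerivAt (fun u => ∫ s in (0:ℝ)..u, g s) (g t) t :=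
  (hg.integral_hasStrictDerivAt 0 t).hasDerivAt

lemma fderiv_eq_mulVec (f : (Fin 2 → ℝ) → (Fin 2 → ℝ)) (x v : Fin 2 → ℝ) :
    fderiv ℝ f x v = (Matrix.of fun i j => fderiv ℝ f x (Pi.single j 1) i).mulVec v := by
  have hv : v = v 0 • (Pi.single 0 1 : Fin 2 → ℝ) + v 1 • (Pi.single 1 1 : Fin 2 → ℝ) := by
    funext j; fin_cases j <;> simp
  funext i
  rw [hv]
  simp [Matrix.mulVec, dotProduct, Fin.sum_univ_two, mul_comm]

/-- **Theorem 3, first part.** The covector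
`v₁(t) = (1/b(t)) (−α(t) f⊥(x₀ t) + β(t) f(x₀ t))` solves the adjoint
equation `ẏ(t) = −A(t)ᵀ y(t)`, where `A t = Df (x₀ t)`. -/
theorem v1_solves_adjoint
    (f : (Fin 2 → ℝ) → (Fin 2 → ℝ)) (x₀ : ℝ → (Fin 2 → ℝ)) (T : ℝ)
    (hf : ContDiff ℝ 1 f)
    (hx : ∀ t, HasDerivAt x₀ (f (x₀ t)) t)
    (hfne : ∀ t, f (x₀ t) ≠ 0)
    (hT : 0 < T)
    (hper : ∀ t, x₀ (t + T) = x₀ t)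
    (hbT : bD f x₀ T ≠ 1) :
    ∀ t, HasDerivAt (fun τ => v1D f x₀ T τ)
      ((-(jac f (x₀ t))ᵀ).mulVec (v1D f x₀ T t)) t := by
  intro t
  -- continuity of the trajectory and of the Jacobian along it
  have hx0c : Continuous x₀ := continuous_iff_continuousAt.2 fun s => (hx s).continuousAt
  have hFc : Continuous (fun s => f (x₀ s)) := (hf.continuous).comp hx0c
  have hjc : Continuous (fun s => jac f (x₀ s)) := by
    apply continuous_matrix
    intro i j
    exact (continuous_apply i).comp
      (((hf.continuous_fderiv one_ne_zero).comp hx0c).clm_apply continuous_const)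
  -- derivative of f ∘ x₀
  have hg : ∀ s, HasDerivAt (fun τ => f (x₀ τ))
      ((jac f (x₀ s)).mulVec (f (x₀ s))) s := by
    intro s
    have h := ((hf.differentiable one_ne_zero) (x₀ s)).hasFDerivAt.comp_hasDerivAt s (hx s)
    rw [fderiv_eq_mulVec] at h
    exact h
  -- nonvanishing of ‖f∘x₀‖²
  have hNne : ∀ s, f (x₀ s) ⬝ᵥ f (x₀ s) ≠ 0 := by
    intro s h0
    apply hfne s
    have h : f (x₀ s) 0 * f (x₀ s) 0 + f (x₀ s) 1 * f (x₀ s) 1 = 0 := by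
      simpa [dotProduct, Fin.sum_univ_two] using h0
    have h1 : f (x₀ s) 0 = 0 := by nlinarith [sq_nonneg (f (x₀ s) 0), sq_nonneg (f (x₀ s) 1)]
    have h2 : f (x₀ s) 1 = 0 := by nlinarith [sq_nonneg (f (x₀ s) 0), sq_nonneg (f (x₀ s) 1)]
    funext j; fin_cases j <;> simpa [h1, h2]
  have hbne : ∀ s, bD f x₀ s ≠ 0 := fun s => Real.exp_ne_zero _
  -- derivative and continuity of b
  have hdivc : Continuous (fun s => divg f (x₀ s)) := by
    have : (fun s => divg f (x₀ s)) =
        fun s => jac f (x₀ s) 0 0 + jac f (x₀ s) 1 1 := by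
      funext s; simp [divg, Matrix.trace, Fin.sum_univ_two]
    rw [this]
    exact (hjc.matrix_elem 0 0).add (hjc.matrix_elem 1 1)
  have hbt : ∀ s, HasDerivAt (bD f x₀) (divg f (x₀ s) * bD f x₀ s) s := by
    intro s
    have h := (ftc hdivc s).exp
    rw [mul_comm]; exact h
  have hbc : Continuous (bD f x₀) :=
    continuous_iff_continuousAt.2 fun s => (hbt s).continuousAt
  -- derivative of a (and α)
  have hqc : Continuous (fun s =>
      (f (x₀ s) ⬝ᵥ ((jac f (x₀ s) + (jac f (x₀ s))ᵀ).mulVec (perp (f (x₀ s)))) /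
        (f (x₀ s) ⬝ᵥ f (x₀ s)) ^ 2) * bD f x₀ s) := by
    have hperpc : Continuous (fun s => perp (f (x₀ s))) := by
      apply continuous_pi
      intro i; fin_cases i
      · simpa [perp, Function.comp_def] using (continuous_apply (1 : Fin 2)).comp hFc
      · exact ((continuous_apply (0 : Fin 2)).comp hFc).neg
    have hnum : Continuous (fun s =>
        f (x₀ s) ⬝ᵥ ((jac f (x₀ s) + (jac f (x₀ s))ᵀ).mulVec (perp (f (x₀ s))))) :=
      hFc.dotProduct ((hjc.add hjc.matrix_transpose).matrix_mulVec hperpc)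
    have hden : Continuous (fun s => (f (x₀ s) ⬝ᵥ f (x₀ s)) ^ 2) :=
      (hFc.dotProduct hFc).pow 2
    exact (hnum.div hden fun s => pow_ne_zero _ (hNne s)).mul hbc
  have hαt : HasDerivAt (fun τ => alphaD f x₀ T τ)
      ((f (x₀ t) ⬝ᵥ ((jac f (x₀ t) + (jac f (x₀ t))ᵀ).mulVec (perp (f (x₀ t)))) /
        (f (x₀ t) ⬝ᵥ f (x₀ t)) ^ 2) * bD f x₀ t) t := by
    have h := (ftc hqc t).const_add (aD f x₀ T / (bD f x₀ T - 1))
    exact h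
  -- component derivatives of f ∘ x₀
  have hF0 : HasDerivAt (fun τ => f (x₀ τ) 0) (((jac f (x₀ t)).mulVec (f (x₀ t))) 0) t :=
    hasDerivAt_pi.1 (hg t) 0
  have hF1 : HasDerivAt (fun τ => f (x₀ τ) 1) (((jac f (x₀ t)).mulVec (f (x₀ t))) 1) t :=
    hasDerivAt_pi.1 (hg t) 1
  -- derivative of N = f⬝f
  have hN : HasDerivAt (fun τ => f (x₀ τ) ⬝ᵥ f (x₀ τ))
      (((jac f (x₀ t)).mulVec (f (x₀ t))) 0 * f (x₀ t) 0 +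
        f (x₀ t) 0 * ((jac f (x₀ t)).mulVec (f (x₀ t))) 0 +
        (((jac f (x₀ t)).mulVec (f (x₀ t))) 1 * f (x₀ t) 1 +
          f (x₀ t) 1 * ((jac f (x₀ t)).mulVec (f (x₀ t))) 1)) t := by
    have heq : (fun τ => f (x₀ τ) ⬝ᵥ f (x₀ τ)) =
        fun τ => f (x₀ τ) 0 * f (x₀ τ) 0 + f (x₀ τ) 1 * f (x₀ τ) 1 := by
      funext τ; simp [dotProduct, Fin.sum_univ_two]
    rw [heq]
    exact (hF0.mul hF0).add (hF1.mul hF1)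
  -- derivative of β
  have hβ := (hbt t).div hN (hNne t)
  -- put it together componentwise
  apply hasDerivAt_pi.2
  intro i
  have hbinv := (hasDerivAt_const t (1:ℝ)).div (hbt t) (hbne t)
  fin_cases i
  · have heq : (fun τ => v1D f x₀ T τ 0) =
        fun τ => (1 / bD f x₀ τ) *
          (-(alphaD f x₀ T τ) * f (x₀ τ) 1 + betaD f x₀ τ * f (x₀ τ) 0) := by
      funext τ
      simp only [v1D, Pi.smul_apply, Pi.add_apply, smul_eq_mul, perp,
        Matrix.cons_val_zero, Matrix.cons_val_one, Matrix.head_cons]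
    have hd := hbinv.mul ((hαt.neg.mul hF1).add (hβ.mul hF0))
    show HasDerivAt (fun τ => v1D f x₀ T τ 0) (((-(jac f (x₀ t))ᵀ).mulVec (v1D f x₀ T t)) 0) t
    have hd' : HasDerivAt
        (fun τ => (1 / bD f x₀ τ) *
          (-(alphaD f x₀ T τ) * f (x₀ τ) 1 + betaD f x₀ τ * f (x₀ τ) 0))
        (((-(jac f (x₀ t))ᵀ).mulVec (v1D f x₀ T t)) 0) t := by
      simp only [betaD] at hd ⊢
      refine hd.congr_deriv ?_
      have h00 : f (x₀ t) 0 * f (x₀ t) 0 + f (x₀ t) 1 * f (x₀ t) 1 ≠ 0 := by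
        simpa [dotProduct, Fin.sum_univ_two] using hNne t
      simp only [v1D, betaD, perp, jac, divg, Matrix.trace, Matrix.diag, Matrix.mulVec,
        dotProduct, Fin.sum_univ_two,
        Pi.div_apply, Pi.neg_apply, Pi.mul_apply, Matrix.neg_apply, Matrix.transpose_apply, Matrix.add_apply, Matrix.of_apply,
        Pi.smul_apply, Pi.add_apply, smul_eq_mul, Matrix.cons_val_zero, Matrix.cons_val_one,
        Matrix.head_cons]
      have h01 : f (x₀ t) 0 ^ 2 + f (x₀ t) 1 ^ 2 ≠ 0 := by rw [sq, sq]; exact h00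
      have h10 : f (x₀ t) 1 ^ 2 + f (x₀ t) 0 ^ 2 ≠ 0 := by rw [add_comm]; exact h01
      field_simp [hbne t, h00, h01, h10]
      ring
    exact hd'.congr_of_eventuallyEq (Filter.Eventually.of_forall fun τ => congrFun heq τ)
  · have heq : (fun τ => v1D f x₀ T τ 1) =
        fun τ => (1 / bD f x₀ τ) *
          (-(alphaD f x₀ T τ) * (-(f (x₀ τ) 0)) + betaD f x₀ τ * f (x₀ τ) 1) := by
      funext τ
      simp only [v1D, Pi.smul_apply, Pi.add_apply, smul_eq_mul, perp,
        Matrix.cons_val_zero, Matrix.cons_val_one, Matrix.head_cons]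
    have hd := hbinv.mul ((hαt.neg.mul hF0.neg).add (hβ.mul hF1))
    show HasDerivAt (fun τ => v1D f x₀ T τ 1) (((-(jac f (x₀ t))ᵀ).mulVec (v1D f x₀ T t)) 1) t
    have hd' : HasDerivAt
        (fun τ => (1 / bD f x₀ τ) *
          (-(alphaD f x₀ T τ) * (-(f (x₀ τ) 0)) + betaD f x₀ τ * f (x₀ τ) 1))
        (((-(jac f (x₀ t))ᵀ).mulVec (v1D f x₀ T t)) 1) t := by
      simp only [betaD] at hd ⊢
      refine hd.congr_deriv ?_
      have h00 : f (x₀ t) 0 * f (x₀ t) 0 + f (x₀ t) 1 * f (x₀ t) 1 ≠ 0 := by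
        simpa [dotProduct, Fin.sum_univ_two] using hNne t
      simp only [v1D, betaD, perp, jac, divg, Matrix.trace, Matrix.diag, Matrix.mulVec,
        dotProduct, Fin.sum_univ_two,
        Pi.div_apply, Pi.neg_apply, Pi.mul_apply, Matrix.neg_apply, Matrix.transpose_apply, Matrix.add_apply, Matrix.of_apply,
        Pi.smul_apply, Pi.add_apply, smul_eq_mul, Matrix.cons_val_zero, Matrix.cons_val_one,
        Matrix.head_cons]
      have h01 : f (x₀ t) 0 ^ 2 + f (x₀ t) 1 ^ 2 ≠ 0 := by rw [sq, sq]; exact h00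
      have h10 : f (x₀ t) 1 ^ 2 + f (x₀ t) 0 ^ 2 ≠ 0 := by rw [add_comm]; exact h01
      field_simp [hbne t, h00, h01, h10]
      ring
    exact hd'.congr_of_eventuallyEq (Filter.Eventually.of_forall fun τ => congrFun heq τ)

end
end

section
/- (Theorem 4: validity of orthogonal decomposition.) Suppose x₀ is T-periodic with b(T) ≠ 1 and f(x₀(t)) ≠ 0 for all t. Then the Floquet eigenvectors u₁(t) := f(x₀(t)) and u₂(t) := e^{−μ₂ t}(α(t) f(x₀(t)) + β(t) f⊥(x₀(t))) satisfy u₁(t)ᵀu₂(t) = 0 for all t if and only if f(x₀(t))ᵀ (A(t) + A(t)ᵀ) f⊥(x₀(t)) = 0 for all t. -/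
open Matrix

noncomputable section

/-- **Theorem 4: validity of the orthogonal decomposition.**
The Floquet eigenvectors `u₁` and `u₂` are orthogonal for every `t` if and only if
`f(x₀ t)ᵀ (A(t) + A(t)ᵀ) f⊥(x₀ t) = 0` for every `t`. -/
theorem orthogonal_decomposition_iff
    (f : (Fin 2 → ℝ) → (Fin 2 → ℝ)) (x₀ : ℝ → (Fin 2 → ℝ)) (T : ℝ)
    (hf : ContDiff ℝ 1 f)
    (hx : ∀ t, HasDerivAt x₀ (f (x₀ t)) t)
    (hfne : ∀ t, f (x₀ t) ≠ 0)
    (hT : 0 < T)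
    (hper : ∀ t, x₀ (t + T) = x₀ t)
    (hbT : bD f x₀ T ≠ 1) :
    (∀ t, u1D f x₀ t ⬝ᵥ u2D f x₀ T t = 0) ↔
    (∀ t, f (x₀ t) ⬝ᵥ
      ((jac f (x₀ t) + (jac f (x₀ t))ᵀ).mulVec (perp (f (x₀ t)))) = 0) := by
  have hx₀ : Continuous x₀ := continuous_iff_continuousAt.2 fun t => (hx t).continuousAt
  have hfc : Continuous fun t => f (x₀ t) := (hf.continuous).comp hx₀
  have hjc : Continuous fun t => jac f (x₀ t) := by
    refine continuous_matrix fun i j => ?_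
    exact (continuous_apply i).comp
      (((ContinuousLinearMap.apply ℝ (Fin 2 → ℝ) (Pi.single j 1)).continuous.comp
        (hf.continuous_fderiv one_ne_zero)).comp hx₀)
  have hdot : ∀ t, f (x₀ t) ⬝ᵥ f (x₀ t) ≠ 0 := fun t h =>
    hfne t (dotProduct_self_eq_zero.mp h)
  have hperpc : Continuous fun t => perp (f (x₀ t)) := by
    refine continuous_pi fun i => ?_
    fin_cases i
    · exact (continuous_apply 1).comp hfc
    · exact ((continuous_apply 0).comp hfc).neg
  have hQc : Continuous fun t =>
      f (x₀ t) ⬝ᵥ ((jac f (x₀ t) + (jac f (x₀ t))ᵀ).mulVec (perp (f (x₀ t)))) :=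
    hfc.dotProduct ((hjc.add hjc.matrix_transpose).matrix_mulVec hperpc)
  have hdivc : Continuous fun t => divg f (x₀ t) := by
    unfold divg Matrix.trace
    exact continuous_finset_sum _ fun i _ => hjc.matrix_elem i i
  have hbc : Continuous fun t => bD f x₀ t := by
    unfold bD
    exact Real.continuous_exp.comp
      (intervalIntegral.continuous_primitive (fun a b => hdivc.intervalIntegrable a b) 0)
  have hbne : ∀ t, bD f x₀ t ≠ 0 := fun t => (Real.exp_pos _).ne'
  set g : ℝ → ℝ := fun s =>
    (f (x₀ s) ⬝ᵥ ((jac f (x₀ s) + (jac f (x₀ s))ᵀ).mulVec (perp (f (x₀ s)))) /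
      (f (x₀ s) ⬝ᵥ f (x₀ s)) ^ 2) * bD f x₀ s with hg
  have hgc : Continuous g :=
    ((hQc.div ((hfc.dotProduct hfc).pow 2) fun t => pow_ne_zero _ (hdot t))).mul hbc
  have haD : ∀ t, aD f x₀ t = ∫ s in (0:ℝ)..t, g s := fun t => rfl
  -- key : orthogonality ↔ alphaD = 0
  have hkey : ∀ t, (u1D f x₀ t ⬝ᵥ u2D f x₀ T t = 0) ↔ alphaD f x₀ T t = 0 := by
    intro t
    have hperp0 : f (x₀ t) ⬝ᵥ perp (f (x₀ t)) = 0 := by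
      simp [perp, dotProduct, Fin.sum_univ_two]; ring
    rw [u1D, u2D, dotProduct_smul, dotProduct_add, dotProduct_smul, dotProduct_smul,
      hperp0]
    simp only [smul_eq_mul, mul_zero, add_zero]
    constructor
    · intro h
      rcases mul_eq_zero.1 h with h | h
      · exact absurd h (Real.exp_ne_zero _)
      · rcases mul_eq_zero.1 h with h | h
        · exact h
        · exact absurd h (hdot t)
    · intro h; rw [h]; ring
  constructor
  · intro h t
    have hα : ∀ t, alphaD f x₀ T t = 0 := fun t => (hkey t).1 (h t)
    have ha0 : aD f x₀ 0 = 0 := by simp [haD]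
    have hc : aD f x₀ T / (bD f x₀ T - 1) = 0 := by
      have := hα 0; rw [alphaD, ha0, add_zero] at this; exact this
    have haz : ∀ t, aD f x₀ t = 0 := by
      intro t; have := hα t; rw [alphaD, hc, zero_add] at this; exact this
    have hderiv : deriv (fun u => ∫ s in (0:ℝ)..u, g s) t = g t :=
      Continuous.deriv_integral g hgc 0 t
    have hzero : (fun u => ∫ s in (0:ℝ)..u, g s) = fun _ => 0 := by
      funext u; rw [← haD]; exact haz u
    rw [hzero] at hderiv
    simp only [deriv_const] at hderiv
    have hg0 : g t = 0 := hderiv.symm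
    rw [hg] at hg0
    rcases mul_eq_zero.1 hg0 with h' | h'
    · rcases div_eq_zero_iff.1 h' with h'' | h''
      · exact h''
      · exact absurd h'' (pow_ne_zero _ (hdot t))
    · exact absurd h' (hbne t)
  · intro h t
    have haz : ∀ u, aD f x₀ u = 0 := by
      intro u
      rw [haD]
      have : ∀ s, g s = 0 := fun s => by rw [hg]; simp only [h s, zero_div, zero_mul]
      simp [this]
    refine (hkey t).2 ?_
    rw [alphaD, haz, haz]
    simp


end
end

section
/- (Theorem 5.) Let x ∈ ℝ² with f(x) ≠ 0. Then f(x)ᵀ (Df(x) + Df(x)ᵀ) f⊥(x) = 0 if and only if there exists a scalar c ∈ ℝ such that the Lie bracket satisfies [f, f⊥](x) = c · f⊥(x), where [f, f⊥] := Df⊥ · f − Df · f⊥. -/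
/-
Write `J = Df(x)` and `v = f(x)`. Since `⊥` is linear, `D(f⊥) = ⊥ ∘ Df`, so
`[f, f⊥](x) = (Jv)⊥ − J v⊥`. The antisymmetry `u · w⊥ = −(u⊥ · w)` then gives
`v · [f, f⊥](x) = −vᵀ (J + Jᵀ) v⊥`, and in the plane a vector is a multiple of `v⊥` exactly when
it is orthogonal to `v ≠ 0`.
-/

open Matrix

noncomputable section

/-- The Lie bracket of two planar vector fields: `[g, h] := Dh · g − Dg · h`. -/
def lieBr (g h : (Fin 2 → ℝ) → (Fin 2 → ℝ)) (x : Fin 2 → ℝ) : Fin 2 → ℝ :=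
  (jac h x).mulVec (g x) - (jac g x).mulVec (h x)

/-- An equivalence rather than a linear map, so that `fderiv` commutes with it even where `f` is not
differentiable. -/
def perpEquiv : (Fin 2 → ℝ) ≃L[ℝ] (Fin 2 → ℝ) :=
  LinearEquiv.toContinuousLinearEquiv
    { toFun := perp
      invFun := fun v => ![-v 1, v 0]
      map_add' := fun u v => by ext i; fin_cases i <;> (simp [perp]; try ring)
      map_smul' := fun c v => by ext i; fin_cases i <;> simp [perp]
      left_inv := fun v => by ext i; fin_cases i <;> simp [perp]
      right_inv := fun v => by ext i; fin_cases i <;> simp [perp] }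

lemma dotProduct_perp_self (v : Fin 2 → ℝ) : v ⬝ᵥ perp v = 0 := by
  simp [perp, dotProduct, Fin.sum_univ_two]; ring

lemma dotProduct_perp (u w : Fin 2 → ℝ) : u ⬝ᵥ perp w = -(perp u ⬝ᵥ w) := by
  simp [perp, dotProduct, Fin.sum_univ_two]

lemma exists_eq_smul_perp_iff_dotProduct_eq_zero {v : Fin 2 → ℝ} (hv : v ≠ 0)
    (z : Fin 2 → ℝ) : (∃ c : ℝ, z = c • perp v) ↔ v ⬝ᵥ z = 0 := by
  refine ⟨?_, fun h => ⟨perp v ⬝ᵥ z / (v ⬝ᵥ v), ?_⟩⟩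
  · rintro ⟨c, rfl⟩
    rw [dotProduct_smul, dotProduct_perp_self, smul_zero]
  have hnorm : v ⬝ᵥ v ≠ 0 := by rwa [Ne, dotProduct_self_eq_zero]
  ext i
  rw [Pi.smul_apply, smul_eq_mul, div_mul_eq_mul_div, eq_div_iff hnorm]
  simp only [dotProduct, Fin.sum_univ_two] at h ⊢
  fin_cases i <;> simp [perp]
  · linear_combination v 0 * h
  · linear_combination v 1 * h

lemma jac_mulVec (f : (Fin 2 → ℝ) → (Fin 2 → ℝ)) (x w : Fin 2 → ℝ) :
    jac f x *ᵥ w = fderiv ℝ f x w := by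
  conv_rhs => rw [pi_eq_sum_univ' w]
  ext i
  simp [jac, mulVec, dotProduct, mul_comm]

lemma jac_perp_comp_mulVec (f : (Fin 2 → ℝ) → (Fin 2 → ℝ)) (x w : Fin 2 → ℝ) :
    jac (fun y => perp (f y)) x *ᵥ w = perp (jac f x *ᵥ w) := by
  rw [jac_mulVec, jac_mulVec, show (fun y => perp (f y)) = perpEquiv ∘ f from rfl,
    perpEquiv.comp_fderiv]
  rfl

lemma lieBr_perp (f : (Fin 2 → ℝ) → (Fin 2 → ℝ)) (x : Fin 2 → ℝ) :
    lieBr f (fun y => perp (f y)) x = perp (jac f x *ᵥ f x) - jac f x *ᵥ perp (f x) := by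
  rw [lieBr, jac_perp_comp_mulVec]

lemma dotProduct_perp_mulVec_sub (A : Matrix (Fin 2) (Fin 2) ℝ) (v : Fin 2 → ℝ) :
    v ⬝ᵥ (perp (A *ᵥ v) - A *ᵥ perp v) = -(v ⬝ᵥ (A + Aᵀ) *ᵥ perp v) := by
  rw [dotProduct_sub, dotProduct_perp, add_mulVec, dotProduct_add, dotProduct_mulVec v Aᵀ,
    vecMul_transpose, dotProduct_comm (perp v)]
  ring

theorem orthogonality_iff_lie_bracket_parallel_general
    (f : (Fin 2 → ℝ) → (Fin 2 → ℝ))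
    (x : Fin 2 → ℝ) (hfx : f x ≠ 0) :
    f x ⬝ᵥ ((jac f x + (jac f x)ᵀ).mulVec (perp (f x))) = 0 ↔
    ∃ c : ℝ, lieBr f (fun y => perp (f y)) x = c • perp (f x) := by
  rw [exists_eq_smul_perp_iff_dotProduct_eq_zero hfx, lieBr_perp, dotProduct_perp_mulVec_sub,
    neg_eq_zero]

/-- **Theorem 5.** For `x` with `f(x) ≠ 0`:
`f(x)ᵀ (Df(x) + Df(x)ᵀ) f⊥(x) = 0` if and only if there is a scalar `c` such that
`[f, f⊥](x) = c · f⊥(x)`. -/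
theorem orthogonality_iff_lie_bracket_parallel
    (f : (Fin 2 → ℝ) → (Fin 2 → ℝ))
    (hf : ContDiff ℝ 2 f)
    (x : Fin 2 → ℝ) (hfx : f x ≠ 0) :
    f x ⬝ᵥ ((jac f x + (jac f x)ᵀ).mulVec (perp (f x))) = 0 ↔
    ∃ c : ℝ, lieBr f (fun y => perp (f y)) x = c • perp (f x) :=
  orthogonality_iff_lie_bracket_parallel_general f x hfx

end
end
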